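/- Let σ ∈ S_n and i, j ∈ Des(σ) with j − i > 1. Then the unordered pairs {w, w′} of reduced words of σ that differ by a single commutation move, where w ends in the letter i and w′ ends in the letter j, are exactly the pairs {a·(j, i), a·(i, j)} obtained by appending these two-letter suffixes to a word a ∈ R(σ·s_i·s_j) (note s_i·s_j = s_j·s_i); in particular, the number of commutation edges of G(σ) joining a word ending in i to a word ending in j equals |R(σ·s_i·s_j)|. Moreover, if i ∈ Des(σ) and every other element j′ of Des(σ) satisfies |j′ − i| ≤ 1, then every commutation move applied to a reduced word of σ ending in i produces a reduced word again ending in i. -/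

import Mathlib

namespace RW

/-- The simple transposition `s i = (i, i+1)`, acting on `ℕ` (points are `1, …, n`;
the point `0` is unused, matching the paper's 1-indexed conventions). -/
def s (i : ℕ) : Equiv.Perm ℕ := Equiv.swap i (i + 1)

/-- The product `s i₁ * s i₂ * ⋯ * s iₗ` of the word `w = [i₁, …, iₗ]`. -/
def π (w : List ℕ) : Equiv.Perm ℕ := (w.map s).prod

/-- The copy of the symmetric group `S_n` inside `Equiv.Perm ℕ`: permutations of
`{1, …, n}`, i.e. fixing `0` and every point `> n`. -/
def Sn (n : ℕ) : Set (Equiv.Perm ℕ) := {σ | ∀ m : ℕ, (m = 0 ∨ n < m) → σ m = m}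

/-- The length `ℓ(σ)`: the number of inversions of `σ`. -/
noncomputable def len (σ : Equiv.Perm ℕ) : ℕ :=
  Nat.card {p : ℕ × ℕ // p.1 < p.2 ∧ σ p.2 < σ p.1}

/-- `w` is a reduced word for `σ`: its product is `σ` and its length is `ℓ(σ)`. -/
def Reduced (σ : Equiv.Perm ℕ) (w : List ℕ) : Prop :=
  π w = σ ∧ w.length = len σ

/-- `R σ`: the set of reduced words of `σ`. -/
def R (σ : Equiv.Perm ℕ) : Set (List ℕ) := {w | Reduced σ w}

/-- The descent set `Des σ = {i ≥ 1 | σ(i) > σ(i+1)}`. -/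
def Des (σ : Equiv.Perm ℕ) : Set ℕ := {i | 1 ≤ i ∧ σ (i + 1) < σ i}

/-- A single commutation move: swap two adjacent letters `a, b` with `|a - b| > 1`. -/
def CommMove (w w' : List ℕ) : Prop :=
  ∃ u v : List ℕ, ∃ a b : ℕ, 1 < ((a : ℤ) - (b : ℤ)).natAbs ∧
    w = u ++ a :: b :: v ∧ w' = u ++ b :: a :: v

/-- A single braid move: replace consecutive letters `(a, a+1, a)` by `(a+1, a, a+1)`
or vice versa. -/
def BraidMove (w w' : List ℕ) : Prop :=
  ∃ u v : List ℕ, ∃ a : ℕ,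
    (w = u ++ a :: (a+1) :: a :: v ∧ w' = u ++ (a+1) :: a :: (a+1) :: v) ∨
    (w = u ++ (a+1) :: a :: (a+1) :: v ∧ w' = u ++ a :: (a+1) :: a :: v)

/-- The braid degree of a word: the number of words obtainable from it by a single
braid move.  (For `w ∈ R σ` these are exactly the braid-edge neighbours of `w` in
`G(σ)`, since a braid move sends reduced words of `σ` to reduced words of `σ`.) -/
noncomputable def dB (w : List ℕ) : ℕ := Nat.card {w' : List ℕ // BraidMove w w'}

/-- The commutation degree of a word: the number of words obtainable from it by a
single commutation move. -/
noncomputable def dC (w : List ℕ) : ℕ := Nat.card {w' : List ℕ // CommMove w w'}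

/-- The number `|B(σ)|` of braid classes: classes of `R σ` under the equivalence
generated by single braid moves. -/
noncomputable def nB (σ : Equiv.Perm ℕ) : ℕ :=
  Nat.card (Quot (fun w w' : R σ => BraidMove w.1 w'.1))

/-- The number `|C(σ)|` of commutation classes. -/
noncomputable def nC (σ : Equiv.Perm ℕ) : ℕ :=
  Nat.card (Quot (fun w w' : R σ => CommMove w.1 w'.1))

/-- The underlying function of `w₀^{(k,i)}`: reverse the interval `{i, …, i+k-1}`. -/
def w0fun (k i : ℕ) : ℕ → ℕ := fun m => if i ≤ m ∧ m < i + k then i + (i + k - 1) - m else m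

theorem w0fun_involutive (k i : ℕ) : Function.Involutive (w0fun k i) := by
  intro m
  unfold w0fun
  split_ifs <;> omega

/-- `w₀^{(k,i)}`: the permutation fixing every point outside `{i, …, i+k-1}` and
reversing that interval. -/
def w0 (k i : ℕ) : Equiv.Perm ℕ := (w0fun_involutive k i).toPerm

/-- Right weak order: `τ ≤ σ` iff `ℓ(τ) + ℓ(τ⁻¹σ) = ℓ(σ)`. -/
def wle (τ σ : Equiv.Perm ℕ) : Prop := len τ + len (τ⁻¹ * σ) = len σ

/-- The support of `σ`: the letters appearing in some reduced word of `σ`. -/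
def supp (σ : Equiv.Perm ℕ) : Set ℕ := {a | ∃ w, Reduced σ w ∧ a ∈ w}

/-!
If `σ (a+1) < σ a` then `ℓ(σ s_a) = ℓ(σ) - 1`, so `u·a` is a reduced word of `σ` exactly when `u`
is one of `σ s_a`. A commutation move changes the last letter of a word only when it swaps the
final two letters. For far descents `i, j` the edges in question are therefore `u·(j,i) — u·(i,j)`
with `u·(j,i)` reduced, i.e. with `u ∈ R(σ s_i s_j)`. If instead a move turns `u·(a,i)` into
`u·(i,a)`, the latter is still reduced, so `a` is a descent of `σ` (nonzero, as `σ 0 = 0`) at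
distance at least two from `i`.
-/

open Filter

lemma s_apply (a m : ℕ) : s a m = if m = a then a + 1 else if m = a + 1 then a else m := by
  simp [s, Equiv.swap_apply_def]

lemma s_mul_self (a : ℕ) : s a * s a = 1 := Equiv.swap_mul_self _ _

lemma s_apply_of_far {a b : ℕ} (h : 1 < ((a : ℤ) - b).natAbs) : s a b = b := by
  rw [s_apply]; split_ifs <;> omega

lemma s_apply_succ_of_far {a b : ℕ} (h : 1 < ((a : ℤ) - b).natAbs) : s a (b + 1) = b + 1 := by
  rw [s_apply]; split_ifs <;> omega

lemma s_mul_comm_of_far {a b : ℕ} (h : 1 < ((a : ℤ) - b).natAbs) : s a * s b = s b * s a := by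
  ext m
  simp only [Equiv.Perm.mul_apply, s_apply]
  split_ifs <;> omega

@[simp] lemma π_nil : π [] = 1 := rfl

@[simp] lemma π_append (u v : List ℕ) : π (u ++ v) = π u * π v := by simp [π]

@[simp] lemma π_cons (a : ℕ) (w : List ℕ) : π (a :: w) = s a * π w := by simp [π]

lemma π_concat (u : List ℕ) (a : ℕ) : π (u ++ [a]) = π u * s a := by simp

/-- Only for these permutations is `len` an honest count: for the others the set of inversions is
infinite and `Nat.card` returns the junk value `0`. -/
def EventuallyFixed (σ : Equiv.Perm ℕ) : Prop := ∀ᶠ m in atTop, σ m = m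

lemma EventuallyFixed.mul {σ τ : Equiv.Perm ℕ} (hσ : EventuallyFixed σ)
    (hτ : EventuallyFixed τ) : EventuallyFixed (σ * τ) :=
  (hσ.and hτ).mono fun m ⟨hσm, hτm⟩ => by rw [Equiv.Perm.mul_apply, hτm, hσm]

lemma eventuallyFixed_s (a : ℕ) : EventuallyFixed (s a) :=
  eventually_atTop.2 ⟨a + 2, fun m hm => by rw [s_apply]; split_ifs <;> omega⟩

lemma eventuallyFixed_π (w : List ℕ) : EventuallyFixed (π w) := by
  induction w with
  | nil => exact Eventually.of_forall fun _ => rfl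
  | cons a w ih => rw [π_cons]; exact (eventuallyFixed_s a).mul ih

lemma EventuallyFixed.of_mul_right {σ τ : Equiv.Perm ℕ} (h : EventuallyFixed (σ * τ))
    (hτ : EventuallyFixed τ) : EventuallyFixed σ := by
  simpa using h.mul (hτ.mono fun m hm => by rw [Equiv.Perm.inv_eq_iff_eq, hm] :
    EventuallyFixed τ⁻¹)

def inversions (σ : Equiv.Perm ℕ) : Set (ℕ × ℕ) := {p | p.1 < p.2 ∧ σ p.2 < σ p.1}

lemma len_eq_ncard_inversions (σ : Equiv.Perm ℕ) : len σ = (inversions σ).ncard := by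
  rw [← Nat.card_coe_set_eq]; rfl

lemma EventuallyFixed.finite_inversions {σ : Equiv.Perm ℕ} (h : EventuallyFixed σ) :
    (inversions σ).Finite := by
  obtain ⟨N, hN⟩ := eventually_atTop.1 h
  refine ((Set.finite_Iio N).prod (Set.finite_Iio N)).subset ?_
  rintro ⟨p, q⟩ ⟨hpq, hσ⟩
  dsimp only at hpq hσ
  -- if `q ≥ N` then `σ p > q ≥ N`, so `σ (σ p) = σ p` forces `p = σ p > q`
  have hq : q < N := by
    by_contra! hq
    rw [hN q hq] at hσ
    have hp : N ≤ σ p := by omega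
    have hpfix : σ p = p := σ.injective (hN _ hp)
    omega
  exact ⟨lt_trans hpq hq, hq⟩

lemma inversions_mul_s {σ : Equiv.Perm ℕ} {a : ℕ} (h : σ a < σ (a + 1)) :
    inversions (σ * s a) = insert (a, a + 1) (Prod.map (s a) (s a) '' inversions σ) := by
  ext ⟨p, q⟩
  simp only [inversions, Set.mem_insert_iff, Set.mem_image, Set.mem_ofPred_eq,
    Equiv.Perm.mul_apply, Prod.map, Prod.mk.injEq, Prod.exists]
  constructor
  · rintro ⟨hpq, hσ⟩
    by_cases hp : p = a ∧ q = a + 1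
    · exact Or.inl hp
    · refine Or.inr ⟨s a p, s a q, ⟨?_, hσ⟩, Equiv.swap_apply_self _ _ _,
        Equiv.swap_apply_self _ _ _⟩
      simp only [s_apply]; split_ifs <;> omega
  · rintro (⟨rfl, rfl⟩ | ⟨x, y, ⟨hxy, hσ⟩, rfl, rfl⟩)
    · simpa [s_apply] using h
    · have hne : ¬(x = a ∧ y = a + 1) := by
        rintro ⟨rfl, rfl⟩
        exact lt_asymm h hσ
      refine ⟨?_, by simpa [s] using hσ⟩
      simp only [s_apply]; split_ifs <;> omega

lemma len_mul_s_of_lt {σ : Equiv.Perm ℕ} (hσ : EventuallyFixed σ) {a : ℕ}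
    (h : σ a < σ (a + 1)) : len (σ * s a) = len σ + 1 := by
  have hnotMem : (a, a + 1) ∉ Prod.map (s a) (s a) '' inversions σ := by
    rintro ⟨⟨x, y⟩, ⟨hxy, -⟩, hx⟩
    simp only [Prod.map, Prod.mk.injEq, s_apply] at hx
    obtain ⟨hx, hy⟩ := hx
    split_ifs at hx hy <;> omega
  rw [len_eq_ncard_inversions, len_eq_ncard_inversions, inversions_mul_s h,
    Set.ncard_insert_of_notMem hnotMem (hσ.finite_inversions.image _),
    Set.ncard_image_of_injective _ ((s a).injective.prodMap (s a).injective)]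

lemma len_mul_s_of_gt {σ : Equiv.Perm ℕ} (hσ : EventuallyFixed σ) {a : ℕ}
    (h : σ (a + 1) < σ a) : len (σ * s a) + 1 = len σ := by
  have h' : (σ * s a) a < (σ * s a) (a + 1) := by simpa [s] using h
  simpa [mul_assoc, s_mul_self] using (len_mul_s_of_lt (hσ.mul (eventuallyFixed_s a)) h').symm

lemma len_π_le (w : List ℕ) : len (π w) ≤ w.length := by
  induction w using List.reverseRecOn with
  | nil =>
    have hempty : inversions 1 = ∅ :=
      Set.eq_empty_of_forall_notMem fun p hp => lt_asymm hp.1 hp.2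
    rw [π_nil, len_eq_ncard_inversions, hempty, Set.ncard_empty]; rfl
  | append_singleton u a ih =>
    rw [π_concat, List.length_append, List.length_singleton]
    rcases lt_or_gt_of_ne ((π u).injective.ne (by omega : a ≠ a + 1)) with h | h
    · rw [len_mul_s_of_lt (eventuallyFixed_π u) h]; omega
    · have := len_mul_s_of_gt (eventuallyFixed_π u) h; omega

lemma Reduced.eventuallyFixed {σ : Equiv.Perm ℕ} {w : List ℕ} (h : Reduced σ w) :
    EventuallyFixed σ :=
  h.1 ▸ eventuallyFixed_π w

lemma Reduced.descent_of_concat {σ : Equiv.Perm ℕ} {u : List ℕ} {a : ℕ}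
    (h : Reduced σ (u ++ [a])) : σ (a + 1) < σ a := by
  obtain ⟨hπ, hlen⟩ := h
  rcases lt_or_gt_of_ne (σ.injective.ne (by omega : a + 1 ≠ a)) with hlt | hgt
  · exact hlt
  · -- otherwise `σ s_a = π u` would be longer than `σ` yet have a shorter word
    have hlong := len_mul_s_of_lt (hπ ▸ eventuallyFixed_π _) hgt
    have hu : π u = σ * s a := by rw [← hπ, π_concat, mul_assoc, s_mul_self, mul_one]
    have hshort := hu ▸ len_π_le u
    simp only [List.length_append, List.length_singleton] at hlen
    omega

lemma reduced_concat_iff {σ : Equiv.Perm ℕ} {u : List ℕ} {a : ℕ} (h : σ (a + 1) < σ a) :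
    Reduced σ (u ++ [a]) ↔ Reduced (σ * s a) u := by
  have hπ : π (u ++ [a]) = σ ↔ π u = σ * s a := by
    rw [π_concat]
    constructor
    · intro h; rw [← h, mul_assoc, s_mul_self, mul_one]
    · intro h; rw [h, mul_assoc, s_mul_self, mul_one]
  constructor
  · intro hw
    have hlen := len_mul_s_of_gt hw.eventuallyFixed h
    have hwlen := hw.2
    simp only [List.length_append, List.length_singleton] at hwlen
    exact ⟨hπ.1 hw.1, by omega⟩
  · intro hu
    have hσ := hu.eventuallyFixed.of_mul_right (eventuallyFixed_s a)
    have hlen := len_mul_s_of_gt hσ h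
    have hulen := hu.2
    exact ⟨hπ.2 hu.1, by simp only [List.length_append, List.length_singleton]; omega⟩

lemma Reduced.commMove {σ : Equiv.Perm ℕ} {w w' : List ℕ} (hw : Reduced σ w)
    (h : CommMove w w') : Reduced σ w' := by
  obtain ⟨u, v, a, b, hab, rfl, rfl⟩ := h
  refine ⟨?_, by simpa using hw.2⟩
  rw [← hw.1, π_append, π_append, π_cons, π_cons, π_cons, π_cons, ← mul_assoc (s a),
    ← mul_assoc (s b), s_mul_comm_of_far hab]

lemma CommMove.getLast?_eq_or {w w' : List ℕ} (h : CommMove w w') :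
    w'.getLast? = w.getLast? ∨
      ∃ (u : List ℕ) (a b : ℕ), 1 < ((a : ℤ) - b).natAbs ∧
        w = u ++ [a, b] ∧ w' = u ++ [b, a] := by
  obtain ⟨u, v, a, b, hab, rfl, rfl⟩ := h
  rcases v.eq_nil_or_concat' with rfl | ⟨v, c, rfl⟩
  · exact Or.inr ⟨u, a, b, hab, rfl, rfl⟩
  · left; simp only [← List.cons_append, ← List.append_assoc, List.getLast?_concat]

lemma reduced_append_pair_iff {σ : Equiv.Perm ℕ} {u : List ℕ} {i j : ℕ}
    (hi : σ (i + 1) < σ i) (hj : σ (j + 1) < σ j) (hij : 1 < ((i : ℤ) - j).natAbs) :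
    Reduced σ (u ++ [j, i]) ↔ Reduced (σ * s i * s j) u := by
  have hj' : (σ * s i) (j + 1) < (σ * s i) j := by
    simpa only [Equiv.Perm.mul_apply, s_apply_of_far hij, s_apply_succ_of_far hij] using hj
  rw [show u ++ [j, i] = u ++ [j] ++ [i] by simp, reduced_concat_iff hi, reduced_concat_iff hj']

lemma commEdges_eq_image {σ : Equiv.Perm ℕ} {i j : ℕ} (hi : σ (i + 1) < σ i)
    (hj : σ (j + 1) < σ j) (hij : 1 < ((i : ℤ) - j).natAbs) :
    {p : List ℕ × List ℕ | p.1 ∈ R σ ∧ p.2 ∈ R σ ∧ CommMove p.1 p.2 ∧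
        p.1.getLast? = some i ∧ p.2.getLast? = some j}
      = (fun a => (a ++ [j, i], a ++ [i, j])) '' R (σ * s i * s j) := by
  ext ⟨w, w'⟩
  simp only [Set.mem_ofPred_eq, Set.mem_image, Prod.mk.injEq]
  constructor
  · rintro ⟨hw, -, hmove, hlast, hlast'⟩
    rcases hmove.getLast?_eq_or with heq | ⟨u, a, b, -, rfl, rfl⟩
    · rw [heq, hlast, Option.some_inj] at hlast'
      omega
    · obtain ⟨rfl, rfl⟩ : b = i ∧ a = j := by simp_all
      exact ⟨u, (reduced_append_pair_iff hi hj hij).1 hw, rfl, rfl⟩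
  · rintro ⟨u, hu, rfl, rfl⟩
    have hmove : CommMove (u ++ [j, i]) (u ++ [i, j]) := ⟨u, [], j, i, by omega, rfl, rfl⟩
    have hw : Reduced σ (u ++ [j, i]) := (reduced_append_pair_iff hi hj hij).2 hu
    exact ⟨hw, hw.commMove hmove, hmove, by simp, by simp⟩

/-- For `σ ∈ S_n` and descents `i, j` with `j - i > 1`, the unordered
pairs of reduced words of `σ` differing by a single commutation move, one ending in
`i` and the other in `j`, are exactly the pairs `(a·(j,i), a·(i,j))` with
`a ∈ R(σ s_i s_j)`; in particular the number of such commutation edges of `G(σ)` is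
`|R(σ s_i s_j)|`.  Moreover, if every other descent `j'` of `σ` satisfies
`|j' - i| ≤ 1`, then every commutation move applied to a reduced word of `σ` ending
in `i` produces a word again ending in `i`. -/
theorem statement_4 (n : ℕ) (σ : Equiv.Perm ℕ) (hσ : σ ∈ Sn n) (i : ℕ) (hi : i ∈ Des σ) :
    (∀ j ∈ Des σ, i + 1 < j →
      ({p : List ℕ × List ℕ | p.1 ∈ R σ ∧ p.2 ∈ R σ ∧ CommMove p.1 p.2 ∧
          p.1.getLast? = some i ∧ p.2.getLast? = some j}
        = (fun a => (a ++ [j, i], a ++ [i, j])) '' R (σ * s i * s j)) ∧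
      Nat.card {p : List ℕ × List ℕ | p.1 ∈ R σ ∧ p.2 ∈ R σ ∧ CommMove p.1 p.2 ∧
          p.1.getLast? = some i ∧ p.2.getLast? = some j}
        = Nat.card (R (σ * s i * s j))) ∧
    ((∀ j' ∈ Des σ, j' ≠ i → ((j' : ℤ) - (i : ℤ)).natAbs ≤ 1) →
      ∀ w ∈ R σ, w.getLast? = some i → ∀ w' : List ℕ, CommMove w w' →
        w'.getLast? = some i) := by
  refine ⟨fun j hj hij => ?_, fun hnear w hw hlast w' hmove => ?_⟩
  · have hset := commEdges_eq_image hi.2 hj.2 (by omega : 1 < ((i : ℤ) - j).natAbs)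
    refine ⟨hset, ?_⟩
    rw [hset]
    exact Nat.card_image_of_injective
      (fun u v h => List.append_cancel_right (Prod.ext_iff.1 h).1) _
  · rcases hmove.getLast?_eq_or with heq | ⟨u, a, b, hab, rfl, rfl⟩
    · rw [heq, hlast]
    · obtain rfl : b = i := by simpa using hlast
      have hdes : σ (a + 1) < σ a := by
        have hw' : Reduced σ (u ++ [b] ++ [a]) := by
          simpa using hw.commMove ⟨u, [], a, b, hab, rfl, rfl⟩
        exact hw'.descent_of_concat
      have ha : a ≠ 0 := by
        rintro rfl
        rw [hσ 0 (Or.inl rfl)] at hdes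
        omega
      have hclose := hnear a ⟨Nat.one_le_iff_ne_zero.2 ha, hdes⟩ (by omega)
      omega

end RW
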